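/- arXiv:2412.19063 — 2 statements merged into one kernel-verified Lean document; each statement's English description precedes it below -/
import Mathlib

section
/- Let Λ = diag(λ₁⁻¹,...,λ_{n+m}⁻¹) with 0 < λ₁ ≤ ... ≤ λ_{n+m}, and let r₁, ..., r_m be orthonormal vectors in ℝ^{n+m}. Then ∏_{j=1}^m |Λ r_j|⁻¹ ≤ ∏_{j=1}^m λ_{n+m+1−j}, i.e., the product is bounded by the product of the m largest semi-axes. -/
theorem stmt_8 {n m : ℕ} (lam : Fin (n + m) → ℝ) (hpos : ∀ i, 0 < lam i)
    (hmono : Monotone lam)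
    (L : EuclideanSpace ℝ (Fin (n + m)) → EuclideanSpace ℝ (Fin (n + m)))
    (hL : ∀ x i, L x i = (lam i)⁻¹ * x i)
    (r : Fin m → EuclideanSpace ℝ (Fin (n + m))) (hr : Orthonormal ℝ r) :
    ∏ j, ‖L (r j)‖⁻¹ ≤ ∏ j : Fin m, lam (Fin.natAdd n j) := by
  obtain rfl | hm := Nat.eq_zero_or_pos m
  · simp
  classical
  -- basic data
  set a : Fin (n + m) → ℝ := fun i => ((lam i)⁻¹) ^ 2 with ha
  set p : Fin m → Fin (n + m) → ℝ := fun j i => (r j i) ^ 2 with hp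
  set b : Fin (n + m) → ℝ := fun i => Real.log (a i) with hb
  have hapos : ∀ i, 0 < a i := fun i => pow_pos (inv_pos.mpr (hpos i)) 2
  have hpnn : ∀ j i, 0 ≤ p j i := fun j i => sq_nonneg _
  -- norm formulas
  have hnorm_sq : ∀ (x : EuclideanSpace ℝ (Fin (n + m))), ‖x‖ ^ 2 = ∑ i, (x i) ^ 2 := by
    intro x
    rw [EuclideanSpace.norm_eq, Real.sq_sqrt]
    · simp [Real.norm_eq_abs, sq_abs]
    · positivity
  have hrow : ∀ j, ∑ i, p j i = 1 := by
    intro j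
    have h1 : ‖r j‖ = 1 := hr.1 j
    have := hnorm_sq (r j)
    rw [h1] at this
    simpa [hp] using this.symm
  -- Bessel: column sums are at most 1
  have hcol : ∀ i, ∑ j, p j i ≤ 1 := by
    intro i
    have hb2 := hr.sum_inner_products_le (s := Finset.univ)
      (EuclideanSpace.single i (1 : ℝ))
    have hx : ‖(EuclideanSpace.single i (1 : ℝ) : EuclideanSpace ℝ (Fin (n + m)))‖ = 1 := by
      simp
    rw [hx] at hb2
    have heq : ∀ j : Fin m,
        ‖(inner ℝ (r j) (EuclideanSpace.single i (1 : ℝ)) : ℝ)‖ ^ 2 = p j i := by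
      intro j
      rw [EuclideanSpace.inner_single_right]
      simp [hp, Real.norm_eq_abs, sq_abs]
    calc ∑ j, p j i = ∑ j, ‖(inner ℝ (r j) (EuclideanSpace.single i (1 : ℝ)) : ℝ)‖ ^ 2 := by
            simp_rw [heq]
      _ ≤ 1 ^ 2 := hb2
      _ = 1 := one_pow 2
  have hcolnn : ∀ i, 0 ≤ ∑ j, p j i := fun i => Finset.sum_nonneg fun j _ => hpnn j i
  -- total sum of all p equals m
  have htot : ∑ i, ∑ j, p j i = (m : ℝ) := by
    rw [Finset.sum_comm]
    simp [hrow]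
  -- squared norm of L (r j)
  have hLsq : ∀ j, ‖L (r j)‖ ^ 2 = ∑ i, p j i * a i := by
    intro j
    rw [hnorm_sq]
    apply Finset.sum_congr rfl
    intro i _
    rw [hL, mul_pow]
    simp only [hp, ha]
    ring
  -- AM-GM per j
  have hamgm : ∀ j, Real.exp (∑ i, p j i * b i) ≤ ‖L (r j)‖ ^ 2 := by
    intro j
    rw [hLsq j]
    have := Real.geom_mean_le_arith_mean_weighted Finset.univ (p j) a
      (fun i _ => hpnn j i) (hrow j) (fun i _ => (hapos i).le)
    refine le_trans (le_of_eq ?_) this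
    rw [Real.exp_sum]
    congr 1
    ext i
    rw [hb, Real.rpow_def_of_pos (hapos i)]
    ring_nf
  -- rearrangement inequality on the weights
  have hkey : ∑ j : Fin m, b (Fin.natAdd n j) ≤ ∑ i, (∑ j, p j i) * b i := by
    set c : Fin (n + m) → ℝ := fun i => ∑ j, p j i with hc
    have hbanti : Antitone b := by
      intro i k hik
      have h1 : lam i ≤ lam k := hmono hik
      have h2 : a k ≤ a i := by
        apply pow_le_pow_left₀ (inv_nonneg.mpr (hpos k).le)
        exact inv_anti₀ (hpos i) h1
      exact Real.log_le_log (hapos k) h2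
    set i0 : Fin (n + m) := Fin.natAdd n ⟨0, hm⟩ with hi0
    set B : ℝ := b i0 with hB
    have hsplit : ∀ f : Fin (n + m) → ℝ,
        ∑ i, f i = ∑ i : Fin n, f (Fin.castAdd m i) + ∑ j : Fin m, f (Fin.natAdd n j) :=
      fun f => Fin.sum_univ_add f
    rw [hsplit (fun i => c i * b i)]
    have hsum_c : ∑ i : Fin n, c (Fin.castAdd m i) + ∑ j : Fin m, c (Fin.natAdd n j) = m := by
      rw [← hsplit c]
      exact htot
    -- bounds through B
    have h1 : ∑ j : Fin m, b (Fin.natAdd n j) - ∑ j : Fin m, c (Fin.natAdd n j) * b (Fin.natAdd n j)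
        = ∑ j : Fin m, (1 - c (Fin.natAdd n j)) * b (Fin.natAdd n j) := by
      rw [← Finset.sum_sub_distrib]
      congr 1; ext j; ring
    have h2 : ∑ j : Fin m, (1 - c (Fin.natAdd n j)) * b (Fin.natAdd n j)
        ≤ ∑ j : Fin m, (1 - c (Fin.natAdd n j)) * B := by
      apply Finset.sum_le_sum
      intro j _
      apply mul_le_mul_of_nonneg_left _ (by linarith [hcol (Fin.natAdd n j)])
      apply hbanti
      simp [hi0, Fin.le_def]
    have h3 : ∑ j : Fin m, (1 - c (Fin.natAdd n j)) * B
        = (∑ i : Fin n, c (Fin.castAdd m i)) * B := by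
      rw [← Finset.sum_mul]
      congr 1
      rw [Finset.sum_sub_distrib]
      simp only [Finset.sum_const, Finset.card_univ, Fintype.card_fin, nsmul_eq_mul, mul_one]
      linarith
    have h4 : (∑ i : Fin n, c (Fin.castAdd m i)) * B
        ≤ ∑ i : Fin n, c (Fin.castAdd m i) * b (Fin.castAdd m i) := by
      rw [Finset.sum_mul]
      apply Finset.sum_le_sum
      intro i _
      apply mul_le_mul_of_nonneg_left _ (hcolnn _)
      apply hbanti
      simp only [hi0, Fin.le_def, Fin.coe_castAdd, Fin.coe_natAdd]
      omega
    linarith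
  -- assemble
  have hprod : ((∏ j : Fin m, lam (Fin.natAdd n j))⁻¹) ^ 2 ≤ (∏ j, ‖L (r j)‖) ^ 2 := by
    have e1 : ((∏ j : Fin m, lam (Fin.natAdd n j))⁻¹) ^ 2
        = Real.exp (∑ j : Fin m, b (Fin.natAdd n j)) := by
      rw [Real.exp_sum]
      rw [← Finset.prod_inv_distrib, ← Finset.prod_pow]
      congr 1
      ext j
      rw [hb, Real.exp_log (hapos _)]
    have e2 : Real.exp (∑ i, (∑ j, p j i) * b i) = ∏ j, Real.exp (∑ i, p j i * b i) := by
      rw [← Real.exp_sum]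
      congr 1
      calc ∑ i, (∑ j, p j i) * b i = ∑ i, ∑ j, p j i * b i := by
            apply Finset.sum_congr rfl; intro i _; rw [Finset.sum_mul]
        _ = ∑ j, ∑ i, p j i * b i := Finset.sum_comm
    calc ((∏ j : Fin m, lam (Fin.natAdd n j))⁻¹) ^ 2
        = Real.exp (∑ j : Fin m, b (Fin.natAdd n j)) := e1
      _ ≤ Real.exp (∑ i, (∑ j, p j i) * b i) := Real.exp_le_exp.mpr hkey
      _ = ∏ j, Real.exp (∑ i, p j i * b i) := e2
      _ ≤ ∏ j, ‖L (r j)‖ ^ 2 := Finset.prod_le_prod (fun j _ => (Real.exp_pos _).le)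
            (fun j _ => hamgm j)
      _ = (∏ j, ‖L (r j)‖) ^ 2 := by rw [Finset.prod_pow]
  have hlampos : 0 < ∏ j : Fin m, lam (Fin.natAdd n j) :=
    Finset.prod_pos fun j _ => hpos _
  have hle : (∏ j : Fin m, lam (Fin.natAdd n j))⁻¹ ≤ ∏ j, ‖L (r j)‖ := by
    have h1 : (0:ℝ) ≤ (∏ j : Fin m, lam (Fin.natAdd n j))⁻¹ := inv_nonneg.mpr hlampos.le
    have h2 : (0:ℝ) ≤ ∏ j, ‖L (r j)‖ := Finset.prod_nonneg fun j _ => norm_nonneg _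
    nlinarith [hprod]
  have hnormpos : 0 < ∏ j, ‖L (r j)‖ := lt_of_lt_of_le (inv_pos.mpr hlampos) hle
  rw [Finset.prod_inv_distrib]
  rw [inv_le_comm₀ hnormpos hlampos]
  exact hle
end

section
/- Let K ⊂ ℝ^d be a centrally symmetric convex body with nonempty interior. Then there exists an origin-centered ellipsoid E such that E ⊂ K ⊂ √d · E. -/
open Module
open scoped RealInnerProductSpace Pointwise

lemma key_t (r a b c : ℝ) (hr : 1 < r) (hc0 : 0 ≤ c) (hc1 : c ≤ 1)
    (ha1 : 1 ≤ a) (har : a ≤ r) (hb0 : 0 ≤ b) (hb1 : b ≤ 1)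
    (hab : a^2 + b^2*(r^2-1) = r^2) :
    ∃ t, 0 ≤ t ∧ t ≤ 1 ∧ b^2*(1-c^2) + (a*c - t*r)^2 ≤ (1-t)^2 := by
  have hr1 : (0:ℝ) < r^2 - 1 := by nlinarith
  rcases le_or_gt (r*c) a with hca | hca
  · rcases le_or_gt 1 (c*r) with hcr | hcr
    · refine ⟨(c*r-1)*(a+1)/(r^2-1), div_nonneg (mul_nonneg (by linarith) (by linarith)) hr1.le, ?_, ?_⟩
      · rw [div_le_one hr1]
        nlinarith [mul_le_mul (by linarith : c*r-1 ≤ r-1) (by linarith : a+1 ≤ r+1)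
          (by linarith : (0:ℝ) ≤ a+1) (by linarith : (0:ℝ) ≤ r-1)]
      · have : b^2*(1-c^2) + (a*c - ((c*r-1)*(a+1)/(r^2-1))*r)^2 - (1-(c*r-1)*(a+1)/(r^2-1))^2 = 0 := by
          field_simp
          linear_combination ((1-c^2)*(r^2-1)) * hab
        linarith
    · refine ⟨0, le_refl _, zero_le_one, ?_⟩
      have hrc0 : 0 ≤ r*c := mul_nonneg (by linarith) hc0
      nlinarith [mul_nonneg (by nlinarith : (0:ℝ) ≤ 1 - b^2) (by nlinarith : (0:ℝ) ≤ 1 - (r*c)^2), hab]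
  · refine ⟨(a-1)*(r*c+1)/(r^2-1), div_nonneg (mul_nonneg (by linarith) (by nlinarith)) hr1.le, ?_, ?_⟩
    · rw [div_le_one hr1]
      nlinarith [mul_le_mul (by linarith : a-1 ≤ r-1) (by nlinarith : r*c+1 ≤ r+1)
        (by nlinarith : (0:ℝ) ≤ r*c+1) (by linarith : (0:ℝ) ≤ r-1)]
    · have : b^2*(1-c^2) + (a*c - ((a-1)*(r*c+1)/(r^2-1))*r)^2 - (1-(a-1)*(r*c+1)/(r^2-1))^2 = 0 := by
        field_simp
        linear_combination ((1-c^2)*(r^2-1)) * hab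
      linarith

lemma Mdet {d : ℕ} (hd : 0 < d) (a b : ℝ) (u : EuclideanSpace ℝ (Fin d)) (hu : ‖u‖ = 1) :
    (b • (1 : EuclideanSpace ℝ (Fin d) →L[ℝ] EuclideanSpace ℝ (Fin d))
      + (a-b) • ((innerSL ℝ u).smulRight u)).det = a * b^(d-1) := by
  classical
  set M : EuclideanSpace ℝ (Fin d) →L[ℝ] EuclideanSpace ℝ (Fin d) :=
    b • (1 : EuclideanSpace ℝ (Fin d) →L[ℝ] EuclideanSpace ℝ (Fin d))
      + (a-b) • ((innerSL ℝ u).smulRight u) with hM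
  have card : Module.finrank ℝ (EuclideanSpace ℝ (Fin d)) = Fintype.card (Fin d) := by
    simp [finrank_euclideanSpace_fin]
  set i₀ : Fin d := ⟨0, hd⟩
  have horth : Orthonormal ℝ (({i₀} : Set (Fin d)).restrict
      (fun _ : Fin d => u)) := by
    constructor
    · intro i; exact hu
    · intro i j hij
      exact absurd (Subtype.ext ((i.2 : i.1 ∈ ({i₀}:Set (Fin d)) ).trans
        ((j.2 : j.1 ∈ ({i₀}:Set (Fin d))).symm))) hij
  obtain ⟨B, hB⟩ := horth.exists_orthonormalBasis_extension_of_card_eq card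
  have hBu : B i₀ = u := hB i₀ rfl
  have hmat : LinearMap.toMatrix B.toBasis B.toBasis
        (M : EuclideanSpace ℝ (Fin d) →ₗ[ℝ] EuclideanSpace ℝ (Fin d))
      = Matrix.diagonal (fun i => if i = i₀ then a else b) := by
    ext i j
    rw [LinearMap.toMatrix_apply]
    have h1 : (M : EuclideanSpace ℝ (Fin d) →ₗ[ℝ] EuclideanSpace ℝ (Fin d)) (B.toBasis j)
        = b • B j + ((a-b) * ⟪u, B j⟫) • u := by
      simp [hM, ContinuousLinearMap.smulRight_apply, smul_smul, mul_comm]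
    rw [h1, OrthonormalBasis.coe_toBasis_repr_apply, B.repr_apply_apply]
    have hij := orthonormal_iff_ite.mp B.orthonormal
    rw [inner_add_right, real_inner_smul_right, real_inner_smul_right, ← hBu]
    rw [hij i j, hij i₀ j, hij i i₀]
    by_cases h1 : i = j <;> by_cases h2 : i = i₀ <;>
      simp_all [Matrix.diagonal]
  have hd2 : M.det = (Matrix.diagonal (fun i => if i = i₀ then a else b)).det := by
    show LinearMap.det (M : EuclideanSpace ℝ (Fin d) →ₗ[ℝ] EuclideanSpace ℝ (Fin d)) = _
    rw [← LinearMap.det_toMatrix B.toBasis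
      (M : EuclideanSpace ℝ (Fin d) →ₗ[ℝ] EuclideanSpace ℝ (Fin d)), hmat]
  rw [hd2, Matrix.det_diagonal]
  rw [← Finset.mul_prod_erase Finset.univ _ (Finset.mem_univ i₀)]
  simp only [if_pos rfl]
  congr 1
  rw [Finset.prod_congr rfl (fun x hx => if_neg (Finset.mem_erase.mp hx).1)]
  rw [Finset.prod_const, Finset.card_erase_of_mem (Finset.mem_univ i₀), Finset.card_univ,
    Fintype.card_fin]


lemma aux_sqrt_lt {x r : ℝ} (hx : 0 ≤ x) (h : Real.sqrt x < r) : x < r ^ 2 := by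
  nlinarith [Real.sq_sqrt hx, Real.sqrt_nonneg x]

lemma aux_one_lt {dd r : ℝ} (h1 : 1 ≤ dd) (h2 : dd < r^2) (h0 : 0 ≤ r) : 1 < r := by
  nlinarith

lemma aux_sq_gt {r : ℝ} (hr : 1 < r) : 0 < r^2 - 1 := by nlinarith

lemma aux_sq_pos {r dd : ℝ} (hr : 1 < r) (hd : 1 ≤ dd) : 0 < (r^2-1)*(2*dd) :=
  mul_pos (aux_sq_gt hr) (by linarith)



lemma aux_one_le {a s : ℝ} (h0 : 0 < a) (h : a^2 = 1 + s) (hs : 0 ≤ s) : 1 ≤ a := by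
  nlinarith

lemma aux_le {a r : ℝ} (h0 : 0 < a) (hr : 0 < r) (ha : a^2 ≤ r^2) : a ≤ r := by
  nlinarith

lemma aux_vol {P e nn : ℝ} (he : 0 < e) (h : e * (P * nn) < P - nn) :
    1 < (1 + e*P) * (1 - nn*e) := by nlinarith

lemma aux_sq_lt {x : ℝ} (h0 : 0 < x) (h : 1 < x^2) : 1 < x := by nlinarith

lemma aux_hsq (a c t r σ : ℝ) (hσ2 : σ^2 = 1) (hσc : σ * c = |c|) :
    (a*c - t*σ*r)^2 = (a*|c| - t*r)^2 := by
  have h1 : σ*(a*c - t*σ*r) = a*|c| - t*r := by linear_combination a*hσc - t*r*hσ2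
  calc (a*c - t*σ*r)^2 = σ^2*(a*c - t*σ*r)^2 := by rw [hσ2]; ring
    _ = (σ*(a*c - t*σ*r))^2 := by ring
    _ = (a*|c| - t*r)^2 := by rw [h1]

lemma aux_abs {x y : ℝ} (hx : 0 ≤ x) (hy : 0 ≤ y) (h : x^2 ≤ y^2) : x ≤ y := by
  nlinarith

lemma aux_contra {D m : ℝ} (hD : 0 < D) (hm : 1 < m) (h : D*m ≤ D) : False := by
  nlinarith

set_option maxHeartbeats 1000000 in
theorem stmt_15 {d : ℕ} (K : Set (EuclideanSpace ℝ (Fin d)))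
    (hKc : IsCompact K) (hKconv : Convex ℝ K) (hKint : (interior K).Nonempty)
    (hKsymm : ∀ x ∈ K, -x ∈ K) :
    ∃ L : EuclideanSpace ℝ (Fin d) ≃ₗ[ℝ] EuclideanSpace ℝ (Fin d),
      (L '' Metric.closedBall 0 1) ⊆ K ∧
        K ⊆ Real.sqrt d • (L '' Metric.closedBall 0 1) := by
  classical
  obtain ⟨x₀, hx₀⟩ := hKint
  have hx₀K : x₀ ∈ K := interior_subset hx₀
  have h0K : (0 : EuclideanSpace ℝ (Fin d)) ∈ interior K := by
    have := hKconv.combo_interior_self_mem_interior hx₀ (hKsymm x₀ hx₀K)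
      (by norm_num : (0:ℝ) < 1/2) (by norm_num : (0:ℝ) ≤ 1/2) (by norm_num)
    simpa [smul_neg] using this
  obtain ⟨ε, hε, hball⟩ := Metric.isOpen_iff.1 isOpen_interior 0 h0K
  have hballK : Metric.ball (0:EuclideanSpace ℝ (Fin d)) ε ⊆ K :=
    hball.trans interior_subset
  obtain ⟨R₀, hR₀⟩ := hKc.isBounded.subset_closedBall 0
  set R := max R₀ 1 with hRdef
  have hR1 : (1:ℝ) ≤ R := le_max_right _ _
  have hKR : K ⊆ Metric.closedBall 0 R :=
    hR₀.trans (Metric.closedBall_subset_closedBall (le_max_left _ _))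
  set S : Set (EuclideanSpace ℝ (Fin d) →L[ℝ] EuclideanSpace ℝ (Fin d)) :=
    {A | ∀ x : EuclideanSpace ℝ (Fin d), ‖x‖ ≤ 1 → A x ∈ K} with hS
  have hSclosed : IsClosed S := by
    have : S = ⋂ (x : EuclideanSpace ℝ (Fin d)) (_ : ‖x‖ ≤ 1),
        (fun A : EuclideanSpace ℝ (Fin d) →L[ℝ] EuclideanSpace ℝ (Fin d) => A x) ⁻¹' K := by
      ext A; simp [hS]
    rw [this]
    exact isClosed_iInter fun x => isClosed_iInter fun _ =>
      (hKc.isClosed).preimage (ContinuousLinearMap.apply ℝ _ x).continuous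
  have hSbdd : S ⊆ Metric.closedBall 0 R := by
    intro A hA
    rw [Metric.mem_closedBall, dist_zero_right]
    refine A.opNorm_le_bound (by linarith) fun x => ?_
    rcases eq_or_ne x 0 with rfl | hx
    · simp
    · have hx' : 0 < ‖x‖ := norm_pos_iff.2 hx
      have h1 : ‖((‖x‖⁻¹ : ℝ) • x)‖ ≤ 1 := by
        rw [norm_smul, norm_inv, norm_norm, inv_mul_cancel₀ hx'.ne']
      have h2 := hKR (hA _ h1)
      rw [Metric.mem_closedBall, dist_zero_right, map_smul, norm_smul, norm_inv, norm_norm] at h2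
      calc ‖A x‖ = ‖x‖ * (‖x‖⁻¹ * ‖A x‖) := by field_simp
        _ ≤ ‖x‖ * R := mul_le_mul_of_nonneg_left h2 (norm_nonneg x)
        _ = R * ‖x‖ := mul_comm _ _
  have hScompact : IsCompact S :=
    Metric.isCompact_of_isClosed_isBounded hSclosed (Metric.isBounded_closedBall.subset hSbdd)
  set ε' := ε/2 with hε'def
  have hε' : 0 < ε' := by positivity
  have hIS : (ε' • (1 : EuclideanSpace ℝ (Fin d) →L[ℝ] EuclideanSpace ℝ (Fin d))) ∈ S := by
    intro x hx
    apply hballK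
    rw [Metric.mem_ball, dist_zero_right]
    simp only [ContinuousLinearMap.smul_apply, ContinuousLinearMap.one_apply, norm_smul,
      Real.norm_eq_abs, abs_of_pos hε']
    have h3 := mul_le_mul_of_nonneg_left hx hε'.le
    rw [mul_one] at h3
    calc ε' * ‖x‖ ≤ ε' := h3
      _ < ε := by rw [hε'def]; linarith
  have hIdet : (ε' • (1 : EuclideanSpace ℝ (Fin d) →L[ℝ] EuclideanSpace ℝ (Fin d))).det
      = ε'^d := by
    show LinearMap.det _ = _
    rw [ContinuousLinearMap.coe_smul, ContinuousLinearMap.one_def, ContinuousLinearMap.coe_id,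
      LinearMap.det_smul, LinearMap.det_id, finrank_euclideanSpace_fin, mul_one]
  obtain ⟨A₀, hA₀S, hA₀max⟩ := hScompact.exists_isMaxOn ⟨_, hIS⟩
    ((ContinuousLinearMap.continuous_det.abs).continuousOn)
  have hdetpos : 0 < |A₀.det| := by
    have h1 : |(ε' • (1 : EuclideanSpace ℝ (Fin d) →L[ℝ] EuclideanSpace ℝ (Fin d))).det|
        ≤ |A₀.det| := hA₀max hIS
    rw [hIdet] at h1
    have h2 : 0 < ε'^d := pow_pos hε' d
    calc (0:ℝ) < ε'^d := h2
      _ = |ε'^d| := (abs_of_pos h2).symm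
      _ ≤ _ := h1
  have hdet0 : LinearMap.det (A₀ : EuclideanSpace ℝ (Fin d) →ₗ[ℝ] EuclideanSpace ℝ (Fin d)) ≠ 0 := by
    intro h
    rw [ContinuousLinearMap.det, h] at hdetpos
    simp at hdetpos
  set L := LinearMap.equivOfDetNeZero _ hdet0 with hLdef
  have hLA : ∀ x, L x = A₀ x := by
    intro x
    have : (L : EuclideanSpace ℝ (Fin d) →ₗ[ℝ] EuclideanSpace ℝ (Fin d))
        = (A₀ : EuclideanSpace ℝ (Fin d) →ₗ[ℝ] EuclideanSpace ℝ (Fin d)) :=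
      LinearEquiv.coe_ofIsUnitDet _
    exact DFunLike.congr_fun this x
  clear_value L
  refine ⟨L, ?_, ?_⟩
  · rintro _ ⟨x, hx, rfl⟩
    rw [mem_closedBall_zero_iff] at hx
    rw [hLA]
    exact hA₀S x hx
  -- second inclusion
  have claim : ∀ y ∈ K, ‖L.symm y‖ ≤ Real.sqrt d := by
    intro y hy
    by_contra hr
    push_neg at hr
    have hd0 : 0 < d := by
      rcases Nat.eq_zero_or_pos d with h | h
      · exfalso
        subst h
        have h0 : L.symm y = 0 := Subsingleton.elim _ _
        rw [h0, norm_zero] at hr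
        exact (Real.sqrt_nonneg _).not_gt hr
      · exact h
    set z := L.symm y with hz
    set r := ‖z‖ with hrdef
    have hyz : A₀ z = y := by rw [← hLA]; exact L.apply_symm_apply y
    have hrd : (d:ℝ) < r^2 := aux_sqrt_lt (by positivity) hr
    have hd1 : (1:ℝ) ≤ d := by exact_mod_cast hd0
    have hr1 : 1 < r := aux_one_lt hd1 hrd (norm_nonneg z)
    have hr0 : 0 < r := by linarith
    have hP : 0 < r^2 - 1 := aux_sq_gt hr1
    set u := (r⁻¹ : ℝ) • z with hu
    have hu1 : ‖u‖ = 1 := by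
      rw [hu, norm_smul, norm_inv, Real.norm_eq_abs, abs_of_pos hr0, ← hrdef,
        inv_mul_cancel₀ hr0.ne']
    obtain ⟨n, hdn⟩ : ∃ n, d = n + 1 := ⟨d - 1, (Nat.succ_pred_eq_of_pos hd0).symm⟩
    have hncast : ((d:ℝ) - 1) = (n:ℝ) := by rw [hdn]; push_cast; ring
    set εv := min (1/2 : ℝ) ((r^2 - d)/((r^2-1)*(2*d))) with hεv
    have hεv0 : 0 < εv :=
      lt_min (by norm_num) (div_pos (by linarith) (aux_sq_pos hr1 hd1))
    have hεvhalf : εv ≤ 1/2 := min_le_left _ _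
    have hεvkey : εv * ((r^2-1)*((d:ℝ)-1)) < r^2 - (d:ℝ) := by
      have h1 : εv ≤ (r^2 - d)/((r^2-1)*(2*d)) := min_le_right _ _
      have h2 : εv * ((r^2-1)*(2*(d:ℝ))) ≤ r^2 - d := by
        rw [← le_div_iff₀ (aux_sq_pos hr1 hd1)]; exact h1
      have h3 : εv * ((r^2-1)*((d:ℝ)-1)) < εv * ((r^2-1)*(2*d)) := by
        apply mul_lt_mul_of_pos_left _ hεv0
        apply mul_lt_mul_of_pos_left _ hP
        linarith
      linarith
    have hεP : 0 < εv * (r^2-1) := mul_pos hεv0 hP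
    set a := Real.sqrt (1 + εv*(r^2-1)) with ha
    set b := Real.sqrt (1 - εv) with hb
    have hb2 : b^2 = 1 - εv := Real.sq_sqrt (by linarith)
    have ha2 : a^2 = 1 + εv*(r^2-1) := Real.sq_sqrt (by linarith)
    have ha0 : 0 < a := Real.sqrt_pos.2 (by linarith)
    have hb0 : 0 < b := Real.sqrt_pos.2 (by linarith)
    have ha1 : 1 ≤ a := aux_one_le ha0 ha2 hεP.le
    have har : a ≤ r := by
      apply aux_le ha0 hr0
      rw [ha2]
      have h4 : εv * (r^2-1) ≤ 1 * (r^2-1) :=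
        mul_le_mul_of_nonneg_right (by linarith) hP.le
      linarith
    have hb1 : b ≤ 1 := by
      rw [hb]
      exact Real.sqrt_le_one.2 (by linarith)
    have hab : a^2 + b^2*(r^2-1) = r^2 := by rw [ha2, hb2]; ring
    -- volume
    have hvol : 1 < a * b^(d-1) := by
      have hbern : 1 - (n:ℝ)*εv ≤ (b^2)^n := by
        have h := one_add_mul_le_pow (a := -εv) (by linarith) n
        rw [hb2]
        calc 1 - (n:ℝ)*εv = 1 + n * (-εv) := by ring
          _ ≤ (1 + (-εv))^n := h
          _ = (1 - εv)^n := by ring_nf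
      have h2 : a^2 * (1 - (n:ℝ)*εv) ≤ a^2 * (b^2)^n :=
        mul_le_mul_of_nonneg_left hbern (sq_nonneg a)
      have h3 : 1 < a^2 * (1 - (n:ℝ)*εv) := by
        rw [ha2]
        refine aux_vol hεv0 ?_
        have hkey : εv * ((r^2-1)*(n:ℝ)) < r^2 - d := by
          rw [← hncast]; exact hεvkey
        linarith [hncast, hkey]
      have h4 : 1 < (a * b^n)^2 := by
        have h5 : (a * b^n)^2 = a^2 * (b^2)^n := by ring
        rw [h5]; linarith
      have h6 : 1 < a * b^n := aux_sq_lt (mul_pos ha0 (pow_pos hb0 n)) h4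
      rw [hdn]; simpa using h6
    set M := b • (1 : EuclideanSpace ℝ (Fin d) →L[ℝ] EuclideanSpace ℝ (Fin d))
      + (a-b) • ((innerSL ℝ u).smulRight u) with hM
    have hMdet : M.det = a * b^(d-1) := Mdet hd0 a b u hu1
    have hMS : (A₀.comp M) ∈ S := by
      intro x hx
      set c := ⟪u, x⟫ with hc
      have hc1 : |c| ≤ 1 := by
        have h1 := abs_real_inner_le_norm u x
        rw [hu1, one_mul] at h1
        exact h1.trans hx
      set σ : ℝ := if 0 ≤ c then 1 else -1 with hσ
      have hσ2 : σ^2 = 1 := by rw [hσ]; split_ifs <;> norm_num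
      have hσc : σ * c = |c| := by
        rw [hσ]; split_ifs with h
        · simp [abs_of_nonneg h]
        · rw [abs_of_neg (lt_of_not_ge h)]; ring
      obtain ⟨t, ht0, ht1, htineq⟩ := key_t r a b |c| hr1 (abs_nonneg c) hc1 ha1 har hb0.le hb1 hab
      set v := M x - (t*σ*r) • u with hv
      have hMx : M x = b • x + ((a-b)*c) • u := by
        simp [hM, ContinuousLinearMap.smulRight_apply, smul_smul, hc, mul_comm]
      have hv' : v = b • (x - c • u) + (a*c - t*σ*r) • u := by
        rw [hv, hMx]
        module
      have hxu : ⟪x, u⟫ = c := by rw [real_inner_comm]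
      have huu : ⟪u, u⟫ = (1:ℝ) := by
        rw [real_inner_self_eq_norm_sq, hu1]; norm_num
      have hinner_xu : ⟪x - c • u, u⟫ = 0 := by
        rw [inner_sub_left, real_inner_smul_left, hxu, huu]
        ring
      have horth : ⟪b • (x - c • u), (a*c - t*σ*r) • u⟫ = 0 := by
        rw [real_inner_smul_left, real_inner_smul_right, hinner_xu]
        ring
      have hx1 : ‖x‖^2 ≤ 1 := by
        have := pow_le_pow_left₀ (norm_nonneg x) hx 2
        simpa using this
      have hx2 : ‖x - c • u‖^2 ≤ 1 - |c|^2 := by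
        have he : ‖x - c • u‖^2 = ‖x‖^2 - 2*⟪x, c • u⟫ + ‖c • u‖^2 := norm_sub_sq_real x (c • u)
        rw [he, real_inner_smul_right, hxu, norm_smul, Real.norm_eq_abs, hu1, mul_one]
        have hca : |c|^2 = c^2 := sq_abs c
        linarith [hx1, hca]
      have hexpand : ‖v‖^2 = b^2*‖x - c • u‖^2 + (a*c - t*σ*r)^2 := by
        have e1 : ‖b • (x - c • u)‖^2 = b^2 * ‖x - c • u‖^2 := by
          rw [norm_smul, mul_pow, Real.norm_eq_abs, sq_abs]
        have e2 : ‖(a*c - t*σ*r) • u‖^2 = (a*c - t*σ*r)^2 := by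
          rw [norm_smul, mul_pow, Real.norm_eq_abs, sq_abs, hu1, one_pow, mul_one]
        rw [hv', norm_add_sq_real, horth, e1, e2]
        ring
      have hsq : (a*c - t*σ*r)^2 = (a*|c| - t*r)^2 := aux_hsq a c t r σ hσ2 hσc
      have hvnorm : ‖v‖^2 ≤ (1-t)^2 := by
        rw [hexpand, hsq]
        have h7 : b^2*‖x - c • u‖^2 ≤ b^2*(1-|c|^2) :=
          mul_le_mul_of_nonneg_left hx2 (sq_nonneg b)
        linarith [htineq, h7]
      have hvle : ‖v‖ ≤ 1 - t := aux_abs (norm_nonneg v) (by linarith) hvnorm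
      have hMxdecomp : M x = (t*σ*r) • u + v := by rw [hv]; abel
      have hσy : σ • y ∈ K := by
        rw [hσ]; split_ifs
        · simpa using hy
        · have := hKsymm y hy
          simpa using this
      have hA₀u : A₀ u = (r⁻¹ : ℝ) • y := by rw [hu, map_smul, hyz]
      have hAv : A₀ ((t*σ*r) • u) = t • (σ • y) := by
        rw [map_smul, hA₀u, smul_smul, smul_smul]
        congr 1
        field_simp
      rcases eq_or_lt_of_le ht1 with rfl | ht1'
      · have hv0 : v = 0 := by
          have : ‖v‖ ≤ 0 := by linarith
          exact norm_le_zero_iff.1 this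
        rw [ContinuousLinearMap.comp_apply, hMxdecomp, hv0, add_zero, hAv, one_smul]
        exact hσy
      · set q := ((1-t)⁻¹ : ℝ) • v with hq
        have hqn : ‖q‖ ≤ 1 := by
          rw [hq, norm_smul, norm_inv, Real.norm_eq_abs, abs_of_pos (by linarith : (0:ℝ) < 1-t)]
          rw [inv_mul_le_iff₀ (by linarith : (0:ℝ) < 1-t), mul_one]
          exact hvle
        have hAq : A₀ q ∈ K := hA₀S q hqn
        have hfinal : A₀ (M x) = t • (σ • y) + (1-t) • (A₀ q) := by
          rw [hMxdecomp, map_add, hAv, hq, map_smul, smul_smul ((1:ℝ)-t) ((1-t)⁻¹),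
            mul_inv_cancel₀ (by linarith : (1:ℝ)-t ≠ 0), one_smul]
        rw [ContinuousLinearMap.comp_apply, hfinal]
        exact hKconv hσy hAq ht0 (by linarith) (by ring)
    have hdetcomp : (A₀.comp M).det = A₀.det * M.det := by
      show LinearMap.det _ = _
      exact LinearMap.det_comp (A₀ : EuclideanSpace ℝ (Fin d) →ₗ[ℝ] EuclideanSpace ℝ (Fin d)) (M : EuclideanSpace ℝ (Fin d) →ₗ[ℝ] EuclideanSpace ℝ (Fin d))
    have hle : |(A₀.comp M).det| ≤ |A₀.det| := hA₀max hMS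
    rw [hdetcomp, abs_mul, hMdet] at hle
    have habs : |a * b^(d-1)| = a * b^(d-1) := abs_of_pos (mul_pos ha0 (pow_pos hb0 _))
    rw [habs] at hle
    exact aux_contra hdetpos hvol hle
  -- conclude
  intro y hy
  rcases Nat.eq_zero_or_pos d with hd0 | hd0
  · subst hd0
    have hy0 : y = 0 := Subsingleton.elim _ _
    refine Set.mem_smul_set.mpr ⟨L 0, ⟨0, by simp, rfl⟩, ?_⟩
    rw [hy0, map_zero, smul_zero]
  · have hsd : 0 < Real.sqrt d := Real.sqrt_pos.2 (by exact_mod_cast hd0)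
    have h1 := claim y hy
    refine Set.mem_smul_set.mpr ⟨L ((Real.sqrt d)⁻¹ • L.symm y), ⟨_, ?_, rfl⟩, ?_⟩
    · rw [mem_closedBall_zero_iff, norm_smul, norm_inv, Real.norm_eq_abs, abs_of_pos hsd,
        inv_mul_le_iff₀ hsd, mul_one]
      exact h1
    · rw [map_smul, smul_smul, mul_inv_cancel₀ hsd.ne', one_smul, L.apply_symm_apply]
end
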